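/- Let μ_S and μ_T be probability measures on a measurable space X, let ℓ be a loss function (jointly measurable, nonnegative, symmetric, satisfying the pointwise triangle inequality, bounded by J ≥ 0), let F be a set of measurable functions X → ℝ, and let h : X → ℝ be a measurable labeling function. Then for every f, f* ∈ F, L_{μ_T}(f, h) ≤ L_{μ_S}(f, h) + disc_F(μ_S, μ_T) + L_{μ_T}(f*, h) + L_{μ_S}(f*, h), where disc_F(μ_S, μ_T) = ⨆_{f₁, f₂ ∈ F} |L_{μ_S}(f₁, f₂) − L_{μ_T}(f₁, f₂)|. -/

import Mathlib

open MeasureTheory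

/-- Expected loss of a pair of functions under a measure. -/
noncomputable def expLoss {X : Type*} [MeasurableSpace X] (ℓ : ℝ → ℝ → ℝ)
    (μ : Measure X) (f f' : X → ℝ) : ℝ := ∫ x, ℓ (f x) (f' x) ∂μ

/-- The discrepancy distance between two measures over a hypothesis class. -/
noncomputable def disc {X : Type*} [MeasurableSpace X] (ℓ : ℝ → ℝ → ℝ)
    (F : Set (X → ℝ)) (μ ν : Measure X) : ℝ :=
  sSup {d : ℝ | ∃ f₁ ∈ F, ∃ f₂ ∈ F, d = |expLoss ℓ μ f₁ f₂ - expLoss ℓ ν f₁ f₂|}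

/-! The bound is two applications of the triangle inequality for the expected loss,
`L_T(f, h) ≤ L_T(f, f*) + L_T(f*, h)` and `L_S(f, f*) ≤ L_S(f, h) + L_S(h, f*)`, glued together by
`L_T(f, f*) ≤ L_S(f, f*) + disc_F(μ_S, μ_T)`, which holds because `f, f* ∈ F`. Boundedness of `ℓ`
makes every expected loss integrable and keeps the set defining `disc` bounded above. -/

section ExpLoss

variable {X : Type*} [MeasurableSpace X] {ℓ : ℝ → ℝ → ℝ} {J : ℝ}

lemma integrable_loss_comp (μ : Measure X) [IsFiniteMeasure μ]
    (hmeas : Measurable (Function.uncurry ℓ)) (hnonneg : ∀ a b, 0 ≤ ℓ a b)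
    (hbound : ∀ a b, ℓ a b ≤ J) {f g : X → ℝ} (hf : Measurable f) (hg : Measurable g) :
    Integrable (fun x => ℓ (f x) (g x)) μ := by
  refine (integrable_const J).mono' (hmeas.comp (hf.prodMk hg)).aestronglyMeasurable ?_
  filter_upwards with x
  rw [Real.norm_of_nonneg (hnonneg _ _)]
  exact hbound _ _

lemma expLoss_nonneg (μ : Measure X) (hnonneg : ∀ a b, 0 ≤ ℓ a b) (f g : X → ℝ) :
    0 ≤ expLoss ℓ μ f g :=
  integral_nonneg fun _ => hnonneg _ _

lemma expLoss_le_of_forall_le (μ : Measure X) [IsProbabilityMeasure μ]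
    (hmeas : Measurable (Function.uncurry ℓ)) (hnonneg : ∀ a b, 0 ≤ ℓ a b)
    (hbound : ∀ a b, ℓ a b ≤ J) {f g : X → ℝ} (hf : Measurable f) (hg : Measurable g) :
    expLoss ℓ μ f g ≤ J :=
  (integral_mono (integrable_loss_comp μ hmeas hnonneg hbound hf hg) (integrable_const J)
    fun _ => hbound _ _).trans_eq (by simp)

lemma expLoss_comm (μ : Measure X) (hsymm : ∀ a b, ℓ a b = ℓ b a) (f g : X → ℝ) :
    expLoss ℓ μ f g = expLoss ℓ μ g f := by
  simp only [expLoss, hsymm (f _)]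

lemma expLoss_le_add (μ : Measure X) [IsFiniteMeasure μ]
    (hmeas : Measurable (Function.uncurry ℓ)) (hnonneg : ∀ a b, 0 ≤ ℓ a b)
    (hbound : ∀ a b, ℓ a b ≤ J) (htri : ∀ a b c, ℓ a c ≤ ℓ a b + ℓ b c)
    {f g k : X → ℝ} (hf : Measurable f) (hg : Measurable g) (hk : Measurable k) :
    expLoss ℓ μ f k ≤ expLoss ℓ μ f g + expLoss ℓ μ g k := by
  have hfg := integrable_loss_comp μ hmeas hnonneg hbound hf hg
  have hgk := integrable_loss_comp μ hmeas hnonneg hbound hg hk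
  rw [expLoss, expLoss, expLoss, ← integral_add hfg hgk]
  exact integral_mono (integrable_loss_comp μ hmeas hnonneg hbound hf hk) (hfg.add hgk)
    fun _ => htri _ _ _

lemma abs_expLoss_sub_le_disc (μ ν : Measure X) [IsProbabilityMeasure μ] [IsProbabilityMeasure ν]
    (hmeas : Measurable (Function.uncurry ℓ)) (hnonneg : ∀ a b, 0 ≤ ℓ a b)
    (hbound : ∀ a b, ℓ a b ≤ J) {F : Set (X → ℝ)} (hF : ∀ f ∈ F, Measurable f)
    {f₁ f₂ : X → ℝ} (h₁ : f₁ ∈ F) (h₂ : f₂ ∈ F) :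
    |expLoss ℓ μ f₁ f₂ - expLoss ℓ ν f₁ f₂| ≤ disc ℓ F μ ν := by
  refine le_csSup ⟨J, ?_⟩ ⟨f₁, h₁, f₂, h₂, rfl⟩
  rintro _ ⟨g₁, hg₁, g₂, hg₂, rfl⟩
  exact abs_sub_le_of_nonneg_of_le
    (expLoss_nonneg μ hnonneg _ _)
    (expLoss_le_of_forall_le μ hmeas hnonneg hbound (hF _ hg₁) (hF _ hg₂))
    (expLoss_nonneg ν hnonneg _ _)
    (expLoss_le_of_forall_le ν hmeas hnonneg hbound (hF _ hg₁) (hF _ hg₂))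

lemma expLoss_le_add_disc (μ ν : Measure X) [IsProbabilityMeasure μ] [IsProbabilityMeasure ν]
    (hmeas : Measurable (Function.uncurry ℓ)) (hnonneg : ∀ a b, 0 ≤ ℓ a b)
    (hbound : ∀ a b, ℓ a b ≤ J) {F : Set (X → ℝ)} (hF : ∀ f ∈ F, Measurable f)
    {f₁ f₂ : X → ℝ} (h₁ : f₁ ∈ F) (h₂ : f₂ ∈ F) :
    expLoss ℓ ν f₁ f₂ ≤ expLoss ℓ μ f₁ f₂ + disc ℓ F μ ν := by
  have := abs_expLoss_sub_le_disc μ ν hmeas hnonneg hbound hF h₁ h₂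
  linarith [neg_abs_le (expLoss ℓ μ f₁ f₂ - expLoss ℓ ν f₁ f₂)]

end ExpLoss

theorem risk_transfer_single_general {X : Type*} [MeasurableSpace X]
    (μS μT : Measure X) [IsProbabilityMeasure μS] [IsProbabilityMeasure μT]
    (ℓ : ℝ → ℝ → ℝ) (J : ℝ)
    (hmeas : Measurable (Function.uncurry ℓ))
    (hnonneg : ∀ a b, 0 ≤ ℓ a b)
    (hsymm : ∀ a b, ℓ a b = ℓ b a)
    (htri : ∀ a b c, ℓ a c ≤ ℓ a b + ℓ b c)
    (hbound : ∀ a b, ℓ a b ≤ J)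
    (F : Set (X → ℝ)) (hF : ∀ f ∈ F, Measurable f)
    (h : X → ℝ) (hh : Measurable h)
    (f : X → ℝ) (hfF : f ∈ F) (fstar : X → ℝ) (hfstarF : fstar ∈ F) :
    expLoss ℓ μT f h ≤
      expLoss ℓ μS f h + disc ℓ F μS μT + expLoss ℓ μT fstar h +
        expLoss ℓ μS fstar h := by
  have hf := hF f hfF
  have hfstar := hF fstar hfstarF
  calc expLoss ℓ μT f h ≤ expLoss ℓ μT f fstar + expLoss ℓ μT fstar h :=
        expLoss_le_add μT hmeas hnonneg hbound htri hf hfstar hh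
    _ ≤ expLoss ℓ μS f fstar + disc ℓ F μS μT + expLoss ℓ μT fstar h := by
        gcongr
        exact expLoss_le_add_disc μS μT hmeas hnonneg hbound hF hfF hfstarF
    _ ≤ expLoss ℓ μS f h + expLoss ℓ μS h fstar + disc ℓ F μS μT + expLoss ℓ μT fstar h := by
        gcongr
        exact expLoss_le_add μS hmeas hnonneg hbound htri hf hh hfstar
    _ = _ := by
        rw [expLoss_comm μS hsymm h fstar]
        ring

/-- Single-task risk-transfer bound of Theorem 2.1: the test risk of `f` is bounded by
its selected-set risk plus the discrepancy plus the joint risk of an optimal `f*`. -/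
theorem risk_transfer_single {X : Type*} [MeasurableSpace X]
    (μS μT : Measure X) [IsProbabilityMeasure μS] [IsProbabilityMeasure μT]
    (ℓ : ℝ → ℝ → ℝ) (J : ℝ) (hJ : 0 ≤ J)
    (hmeas : Measurable (Function.uncurry ℓ))
    (hnonneg : ∀ a b, 0 ≤ ℓ a b)
    (hsymm : ∀ a b, ℓ a b = ℓ b a)
    (htri : ∀ a b c, ℓ a c ≤ ℓ a b + ℓ b c)
    (hbound : ∀ a b, ℓ a b ≤ J)
    (F : Set (X → ℝ)) (hF : ∀ f ∈ F, Measurable f)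
    (h : X → ℝ) (hh : Measurable h)
    (f : X → ℝ) (hfF : f ∈ F) (fstar : X → ℝ) (hfstarF : fstar ∈ F) :
    expLoss ℓ μT f h ≤
      expLoss ℓ μS f h + disc ℓ F μS μT + expLoss ℓ μT fstar h +
        expLoss ℓ μS fstar h :=
  risk_transfer_single_general μS μT ℓ J hmeas hnonneg hsymm htri hbound F hF h hh f hfF fstar
    hfstarF
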